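/- arXiv:1607.02172 — 5 statements merged into one kernel-verified Lean document; each statement's English description precedes it below -/
import Mathlib

section
/- Every N×N complex matrix X satisfying [H, X] = 0 and [X₊, X] = 0 is a scalar multiple of the identity matrix. -/
open Matrix

/-- The diagonal matrix `H` with `H_{ii} = N + 1 - 2i` (1-indexed). -/
noncomputable def Hmat (N : ℕ) : Matrix (Fin N) (Fin N) ℂ :=
  Matrix.diagonal fun i => (N : ℂ) - 1 - 2 * (i : ℕ)

/-- The matrix `X₊` with `(X₊)_{i,i+1} = √(i (N - i))` (1-indexed) and all other entries `0`. -/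
noncomputable def Xplus (N : ℕ) : Matrix (Fin N) (Fin N) ℂ :=
  fun i j => if (j : ℕ) = (i : ℕ) + 1
    then (Real.sqrt (((i : ℕ) + 1) * (N - 1 - (i : ℕ))) : ℂ) else 0

/-- Every `N × N` complex matrix `X` with `[H, X] = 0` and `[X₊, X] = 0` is a scalar
multiple of the identity. -/
theorem commutant_is_scalar (N : ℕ) (hN : 2 ≤ N) (X : Matrix (Fin N) (Fin N) ℂ)
    (hH : Hmat N * X - X * Hmat N = 0)
    (hX : Xplus N * X - X * Xplus N = 0) :
    ∃ c : ℂ, X = c • (1 : Matrix (Fin N) (Fin N) ℂ) := by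
  have hoff : ∀ i j : Fin N, i ≠ j → X i j = 0 := by
    intro i j hij
    have h := congrFun (congrFun hH i) j
    simp only [Hmat, Matrix.sub_apply, Matrix.diagonal_mul, Matrix.mul_diagonal,
      Matrix.zero_apply] at h
    have hne : (2 : ℂ) * ((j:ℕ):ℂ) - 2 * ((i:ℕ):ℂ) ≠ 0 := by
      intro hc
      apply hij
      have : ((i:ℕ):ℂ) = ((j:ℕ):ℂ) := by linear_combination -hc/2
      exact Fin.ext (by exact_mod_cast this)
    have h2 : (2 * ((j:ℕ):ℂ) - 2 * ((i:ℕ):ℂ)) * X i j = 0 := by linear_combination h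
    exact (mul_eq_zero.mp h2).resolve_left hne
  have hdiag : ∀ k : ℕ, ∀ hk : k + 1 < N,
      X ⟨k+1, hk⟩ ⟨k+1, hk⟩ = X ⟨k, Nat.lt_of_succ_lt hk⟩ ⟨k, Nat.lt_of_succ_lt hk⟩ := by
    intro k hk
    set i : Fin N := ⟨k, Nat.lt_of_succ_lt hk⟩ with hi
    set j : Fin N := ⟨k+1, hk⟩ with hj
    have h := congrFun (congrFun hX i) j
    simp only [Matrix.sub_apply, Matrix.mul_apply, Matrix.zero_apply] at h
    have h1 : ∑ l, Xplus N i l * X l j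
        = (Real.sqrt (((k:ℝ)+1)*((N:ℝ)-1-(k:ℝ))) : ℂ) * X j j := by
      rw [Finset.sum_eq_single j]
      · simp [Xplus, hi, hj]
      · intro l _ hl
        have : (l:ℕ) ≠ (i:ℕ) + 1 := by
          intro hc; exact hl (Fin.ext (by simp [hi, hj] at hc ⊢; omega))
        simp [Xplus, this]
      · simp
    have h2 : ∑ l, X i l * Xplus N l j
        = X i i * (Real.sqrt (((k:ℝ)+1)*((N:ℝ)-1-(k:ℝ))) : ℂ) := by
      rw [Finset.sum_eq_single i]
      · simp [Xplus, hi, hj]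
      · intro l _ hl
        rw [hoff i l (Ne.symm hl)]; ring
      · simp
    rw [h1, h2] at h
    have hs : (Real.sqrt (((k:ℝ)+1)*((N:ℝ)-1-(k:ℝ))) : ℂ) ≠ 0 := by
      have hpos : (0:ℝ) < ((k:ℝ)+1) * ((N:ℝ)-1-(k:ℝ)) := by
        apply mul_pos
        · positivity
        · have : (k:ℝ) + 2 ≤ (N:ℝ) := by exact_mod_cast hk
          linarith
      have : Real.sqrt (((k:ℝ)+1)*((N:ℝ)-1-(k:ℝ))) ≠ 0 :=
        ne_of_gt (Real.sqrt_pos.mpr hpos)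
      exact_mod_cast this
    have h3 : (Real.sqrt (((k:ℝ)+1)*((N:ℝ)-1-(k:ℝ))) : ℂ) * (X j j - X i i) = 0 := by
      linear_combination h
    exact sub_eq_zero.mp ((mul_eq_zero.mp h3).resolve_left hs)
  have h0 : 0 < N := by omega
  have hconst : ∀ k : ℕ, ∀ hk : k < N, X ⟨k, hk⟩ ⟨k, hk⟩ = X ⟨0, h0⟩ ⟨0, h0⟩ := by
    intro k
    induction k with
    | zero => intro _; rfl
    | succ n ih => intro hk; rw [hdiag n hk]; exact ih _
  refine ⟨X ⟨0, h0⟩ ⟨0, h0⟩, ?_⟩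
  ext i j
  by_cases hij : i = j
  · subst hij
    simp [Matrix.one_apply]
    exact hconst i.1 i.2
  · simp [Matrix.one_apply, hij, hoff i j hij]
end

section
/- If an N×N complex matrix χ satisfies Tr χ = 0, S⁻¹χᵀS = −χ (i.e. χ is S-skew-adjoint), and [X₊, χ] = 0, then χ = 0. -/
open Matrix

/-- The antidiagonal matrix `S` with `S_{ij} = 1` if `i + j = N + 1` (1-indexed,
i.e. `i + j = N - 1` with 0-indexing) and `0` otherwise. -/
noncomputable def Smat (N : ℕ) : Matrix (Fin N) (Fin N) ℂ :=
  fun i j => if (i : ℕ) + (j : ℕ) = N - 1 then 1 else 0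

namespace SkewProof

noncomputable def r (N k : ℕ) : ℝ := ((k : ℝ) + 1) * ((N : ℝ) - 1 - (k : ℝ))

lemma r_pos {N k : ℕ} (h : k + 1 < N) : 0 < r N k := by
  have h' : (k : ℝ) + 1 < (N : ℝ) := by exact_mod_cast h
  have h0 : (0:ℝ) ≤ (k:ℝ) := Nat.cast_nonneg k
  unfold r
  nlinarith

lemma sqrt_r_pos {N k : ℕ} (h : k + 1 < N) : 0 < Real.sqrt (r N k) :=
  Real.sqrt_pos.mpr (r_pos h)

lemma Xplus_apply (N : ℕ) (i j : Fin N) :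
    Xplus N i j = if (j : ℕ) = (i : ℕ) + 1 then (Real.sqrt (r N (i:ℕ)) : ℂ) else 0 := rfl

lemma Xplus_mul_apply {N : ℕ} (χ : Matrix (Fin N) (Fin N) ℂ) (i j : Fin N) :
    (Xplus N * χ) i j =
      if h : (i : ℕ) + 1 < N then (Real.sqrt (r N (i:ℕ)) : ℂ) * χ ⟨(i:ℕ)+1, h⟩ j else 0 := by
  rw [Matrix.mul_apply]
  split_ifs with h
  · rw [Finset.sum_eq_single (⟨(i:ℕ)+1, h⟩ : Fin N)]
    · rw [Xplus_apply, if_pos rfl]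
    · intro k _ hk
      rw [Xplus_apply, if_neg, zero_mul]
      intro hc
      exact hk (Fin.ext hc)
    · simp
  · apply Finset.sum_eq_zero
    intro k _
    rw [Xplus_apply, if_neg, zero_mul]
    intro hc
    exact h (hc ▸ k.isLt)

lemma mul_Xplus_apply {N : ℕ} (χ : Matrix (Fin N) (Fin N) ℂ) (i j : Fin N) :
    (χ * Xplus N) i j =
      if h : 0 < (j : ℕ) then
        (Real.sqrt (r N ((j:ℕ)-1)) : ℂ) * χ i ⟨(j:ℕ)-1, by omega⟩ else 0 := by
  rw [Matrix.mul_apply]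
  split_ifs with h
  · rw [Finset.sum_eq_single (⟨(j:ℕ)-1, by omega⟩ : Fin N)]
    · have hpos : (j:ℕ) = ((⟨(j:ℕ)-1, by omega⟩ : Fin N) : ℕ) + 1 := by
        simp only [Fin.val_mk]; omega
      rw [Xplus_apply, if_pos hpos, mul_comm]
    · intro k _ hk
      have hcond : ¬ ((j:ℕ) = (k:ℕ) + 1) := by
        intro hc
        exact hk (Fin.ext (by simp only [Fin.val_mk]; omega))
      rw [Xplus_apply, if_neg hcond, mul_zero]
    · simp
  · apply Finset.sum_eq_zero
    intro k _
    have hcond : ¬ ((j:ℕ) = (k:ℕ) + 1) := by omega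
    rw [Xplus_apply, if_neg hcond, mul_zero]

lemma Smat_mul_Smat (N : ℕ) : Smat N * Smat N = 1 := by
  ext i j
  rw [Matrix.mul_apply]
  rw [Finset.sum_eq_single (⟨N-1-(i:ℕ), by omega⟩ : Fin N)]
  · have h1 : Smat N i ⟨N-1-(i:ℕ), by omega⟩ = 1 := by
      unfold Smat
      rw [if_pos (by simp only [Fin.val_mk]; omega)]
    rw [h1, one_mul]
    unfold Smat
    simp only [Fin.val_mk, Matrix.one_apply]
    by_cases h : i = j
    · subst h; rw [if_pos (by omega), if_pos rfl]
    · rw [if_neg, if_neg h]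
      intro hc
      exact h (Fin.ext (by omega)).symm
  · intro k _ hk
    have hcond : ¬ ((i:ℕ) + (k:ℕ) = N - 1) := by
      intro hc
      exact hk (Fin.ext (by simp only [Fin.val_mk]; omega))
    unfold Smat
    rw [if_neg hcond, zero_mul]
  · simp

lemma conj_apply {N : ℕ} (χ : Matrix (Fin N) (Fin N) ℂ) (i j : Fin N) :
    (Smat N * χᵀ * Smat N) i j = χ ⟨N-1-(j:ℕ), by omega⟩ ⟨N-1-(i:ℕ), by omega⟩ := by
  rw [Matrix.mul_apply]
  rw [Finset.sum_eq_single (⟨N-1-(j:ℕ), by omega⟩ : Fin N)]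
  · have h1 : Smat N (⟨N-1-(j:ℕ), by omega⟩ : Fin N) j = 1 := by
      unfold Smat
      rw [if_pos (by simp only [Fin.val_mk]; omega)]
    rw [h1, mul_one]
    rw [Matrix.mul_apply]
    rw [Finset.sum_eq_single (⟨N-1-(i:ℕ), by omega⟩ : Fin N)]
    · have h2 : Smat N i (⟨N-1-(i:ℕ), by omega⟩ : Fin N) = 1 := by
        unfold Smat
        rw [if_pos (by simp only [Fin.val_mk]; omega)]
      rw [h2, one_mul, Matrix.transpose_apply]
    · intro k _ hk
      have hcond : ¬ ((i:ℕ) + (k:ℕ) = N - 1) := by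
        intro hc
        exact hk (Fin.ext (by simp only [Fin.val_mk]; omega))
      unfold Smat
      rw [if_neg hcond, zero_mul]
    · simp
  · intro k _ hk
    have hcond : ¬ ((k:ℕ) + (j:ℕ) = N - 1) := by
      intro hc
      exact hk (Fin.ext (by simp only [Fin.val_mk]; omega))
    conv_lhs => rw [Smat]
    rw [if_neg hcond, mul_zero]
  · simp

lemma key {N : ℕ} {χ : Matrix (Fin N) (Fin N) ℂ}
    (hcomm : Xplus N * χ - χ * Xplus N = 0)
    (i j : ℕ) (hi : i + 1 < N) (hj : j < N) :
    (Real.sqrt (r N i) : ℂ) * χ ⟨i+1, hi⟩ ⟨j, hj⟩ =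
      if h : 0 < j then
        (Real.sqrt (r N (j-1)) : ℂ) * χ ⟨i, by omega⟩ ⟨j-1, by omega⟩ else 0 := by
  have heq : Xplus N * χ = χ * Xplus N := sub_eq_zero.mp hcomm
  have h0 := congrFun (congrFun heq (⟨i, by omega⟩ : Fin N)) (⟨j, hj⟩ : Fin N)
  rw [Xplus_mul_apply, mul_Xplus_apply] at h0
  simp only [Fin.val_mk] at h0
  rw [dif_pos hi] at h0
  exact h0

lemma lower {N : ℕ} {χ : Matrix (Fin N) (Fin N) ℂ}
    (hcomm : Xplus N * χ - χ * Xplus N = 0) :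
    ∀ n : ℕ, ∀ i j : Fin N, (j : ℕ) = n → (j : ℕ) < (i : ℕ) → χ i j = 0 := by
  intro n
  induction n with
  | zero =>
    intro i j hjn hlt
    have hi1 : (i:ℕ) - 1 + 1 < N := by omega
    have hk := key hcomm ((i:ℕ)-1) (j:ℕ) hi1 j.isLt
    rw [dif_neg (by omega)] at hk
    have e1 : (⟨(i:ℕ)-1+1, hi1⟩ : Fin N) = i := Fin.ext (by simp only [Fin.val_mk]; omega)
    rw [e1, Fin.eta] at hk
    rcases mul_eq_zero.mp hk with h | h
    · exact absurd h (by
        simp only [ne_eq, Complex.ofReal_eq_zero]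
        exact (sqrt_r_pos (by omega)).ne')
    · exact h
  | succ n ih =>
    intro i j hjn hlt
    have hi1 : (i:ℕ) - 1 + 1 < N := by omega
    have hk := key hcomm ((i:ℕ)-1) (j:ℕ) hi1 j.isLt
    rw [dif_pos (by omega)] at hk
    have e1 : (⟨(i:ℕ)-1+1, hi1⟩ : Fin N) = i := Fin.ext (by simp only [Fin.val_mk]; omega)
    rw [e1, Fin.eta] at hk
    rw [ih ⟨(i:ℕ)-1, by omega⟩ ⟨(j:ℕ)-1, by omega⟩ (by simp only [Fin.val_mk]; omega)
      (by simp only [Fin.val_mk]; omega), mul_zero] at hk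
    rcases mul_eq_zero.mp hk with h | h
    · exact absurd h (by
        simp only [ne_eq, Complex.ofReal_eq_zero]
        exact (sqrt_r_pos (by omega)).ne')
    · exact h

lemma diag {N : ℕ} {χ : Matrix (Fin N) (Fin N) ℂ}
    (hcomm : Xplus N * χ - χ * Xplus N = 0) (d : ℕ) (hd : d < N) :
    ∀ i : ℕ, ∀ hid : i + d < N,
      χ ⟨i, by omega⟩ ⟨i+d, hid⟩ * ((∏ k ∈ Finset.range i, Real.sqrt (r N k) : ℝ) : ℂ)
        = χ ⟨0, by omega⟩ ⟨d, hd⟩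
            * ((∏ k ∈ Finset.range i, Real.sqrt (r N (k+d)) : ℝ) : ℂ) := by
  intro i
  induction i with
  | zero =>
    intro hid
    simp only [Finset.range_zero, Finset.prod_empty, Complex.ofReal_one, mul_one, Nat.zero_add]
  | succ i ih =>
    intro hid
    have hk := key hcomm i (i+1+d) (by omega) (by omega)
    rw [dif_pos (by omega)] at hk
    simp only [show i+1+d-1 = i+d from by omega] at hk
    have ihh := ih (by omega)
    rw [Finset.prod_range_succ, Finset.prod_range_succ, Complex.ofReal_mul, Complex.ofReal_mul]
    have e1 : (⟨i+1, by omega⟩ : Fin N) = (⟨i+1, by omega⟩ : Fin N) := rfl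
    linear_combination ((∏ k ∈ Finset.range i, Real.sqrt (r N k) : ℝ) : ℂ) * hk
      + ((Real.sqrt (r N (i+d)) : ℝ) : ℂ) * ihh

end SkewProof


/-- If `χ` is traceless, `S`-skew-adjoint (`S⁻¹ χᵀ S = -χ`), and commutes with `X₊`,
then `χ = 0`. -/
theorem skew_adjoint_commuting_vanishes (N : ℕ) (hN : 2 ≤ N)
    (χ : Matrix (Fin N) (Fin N) ℂ)
    (htr : χ.trace = 0)
    (hskew : (Smat N)⁻¹ * χᵀ * Smat N = -χ)
    (hcomm : Xplus N * χ - χ * Xplus N = 0) :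
    χ = 0 := by
  have hinv : (Smat N)⁻¹ = Smat N := Matrix.inv_eq_right_inv (SkewProof.Smat_mul_Smat N)
  rw [hinv] at hskew
  have hskew' : ∀ i j : Fin N,
      χ ⟨N-1-(j:ℕ), by omega⟩ ⟨N-1-(i:ℕ), by omega⟩ = -χ i j := by
    intro i j
    rw [← SkewProof.conj_apply χ i j, hskew, Matrix.neg_apply]
  have h0 : ∀ (d : ℕ) (hd : d < N), χ ⟨0, by omega⟩ ⟨d, hd⟩ = 0 := by
    intro d hd
    have hD := SkewProof.diag hcomm d hd (N-1-d) (by omega)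
    simp only [show N-1-d+d = N-1 from by omega] at hD
    have hs := hskew' ⟨0, by omega⟩ ⟨d, hd⟩
    simp only [Fin.val_mk, Nat.sub_zero] at hs
    rw [hs] at hD
    set P : ℝ := ∏ k ∈ Finset.range (N-1-d), Real.sqrt (SkewProof.r N k) with hPdef
    set Q : ℝ := ∏ k ∈ Finset.range (N-1-d), Real.sqrt (SkewProof.r N (k+d)) with hQdef
    have hP : 0 < P := Finset.prod_pos fun k hk =>
      SkewProof.sqrt_r_pos (by have := Finset.mem_range.mp hk; omega)
    have hQ : 0 < Q := Finset.prod_pos fun k hk =>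
      SkewProof.sqrt_r_pos (by have := Finset.mem_range.mp hk; omega)
    have hsum : χ ⟨0, by omega⟩ ⟨d, hd⟩ * ((P + Q : ℝ) : ℂ) = 0 := by
      push_cast
      linear_combination -hD
    rcases mul_eq_zero.mp hsum with h | h
    · exact h
    · exact absurd h (by
        simp only [ne_eq, Complex.ofReal_eq_zero]
        nlinarith)
  ext i j
  rw [Matrix.zero_apply]
  by_cases hij : (j : ℕ) < (i : ℕ)
  · exact SkewProof.lower hcomm (j:ℕ) i j rfl hij
  · have hd : (j:ℕ) - (i:ℕ) < N := by omega
    have hD := SkewProof.diag hcomm ((j:ℕ)-(i:ℕ)) hd (i:ℕ)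
      (by omega)
    rw [h0 ((j:ℕ)-(i:ℕ)) hd, zero_mul] at hD
    have e1 : (⟨(i:ℕ), by omega⟩ : Fin N) = i := Fin.eta i i.isLt
    have e2 : (⟨(i:ℕ)+((j:ℕ)-(i:ℕ)), by omega⟩ : Fin N) = j :=
      Fin.ext (by simp only [Fin.val_mk]; omega)
    rw [e1, e2] at hD
    rcases mul_eq_zero.mp hD with h | h
    · exact h
    · exact absurd h (by
        simp only [ne_eq, Complex.ofReal_eq_zero]
        exact (Finset.prod_pos fun k hk =>
          SkewProof.sqrt_r_pos (by have := Finset.mem_range.mp hk; omega)).ne')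
end

section
/- Fix ħ ∈ ℂ. For α ∈ ℂ \ {0} and γ ∈ ℂ, define the N×N complex matrix T(α, γ) = α^H · exp(ħ γ X₊), where exp is the matrix exponential. Then for all nonzero α₁, α₂ ∈ ℂ and all γ₁, γ₂ ∈ ℂ: T(α₂, γ₂) · T(α₁, γ₁) = T(α₂α₁, α₁^{−2}γ₂ + γ₁). (This is the cocycle condition for the transition functions of the deformed bundle E_ħ.) -/
/-!
`X₊` raises the `H`-weight by `2`, so conjugating by the diagonal matrix `α^H` rescales it:
`X₊ α^H = α^H (α⁻² X₊)`. Exponentiating gives `exp (c X₊) α^H = α^H exp (α⁻² c X₊)`, which moves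
`α₁^H` to the left in `T(α₂, γ₂) T(α₁, γ₁)`; the rest is `α₂^H α₁^H = (α₂ α₁)^H` and
`exp (a X₊) exp (b X₊) = exp ((a + b) X₊)`.
-/

open Matrix

/-- The diagonal matrix `α^H` with entries `(α^H)_{ii} = α^(N+1-2i)` (1-indexed). -/
noncomputable def alphaH (N : ℕ) (α : ℂ) : Matrix (Fin N) (Fin N) ℂ :=
  Matrix.diagonal fun i => α ^ ((N : ℤ) - 1 - 2 * (i : ℕ))

/-- The transition matrix `T(α, γ) = α^H · exp(hbar γ X₊)`. -/
noncomputable def Tmat (N : ℕ) (hbar : ℂ) (α γ : ℂ) : Matrix (Fin N) (Fin N) ℂ :=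
  alphaH N α * NormedSpace.exp ((hbar * γ) • Xplus N)

theorem Matrix.exp_mul_eq_mul_exp_of_mul_eq_mul {m 𝔸 : Type*} [Fintype m] [DecidableEq m]
    [NormedCommRing 𝔸] [NormedAlgebra ℚ 𝔸] [CompleteSpace 𝔸] {U A B : Matrix m m 𝔸}
    (hU : IsUnit U) (h : A * U = U * B) :
    NormedSpace.exp A * U = U * NormedSpace.exp B := by
  have hdet : IsUnit U.det := (isUnit_iff_isUnit_det U).mp hU
  have hconj : A = U * B * U⁻¹ := by
    rw [← h, Matrix.mul_assoc, mul_nonsing_inv _ hdet, Matrix.mul_one]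
  rw [hconj, exp_conj U B hU, Matrix.mul_assoc, nonsing_inv_mul _ hdet, Matrix.mul_one]

theorem Matrix.exp_smul_mul_exp_smul {m 𝕂 : Type*} [Fintype m] [DecidableEq m] [RCLike 𝕂]
    (a b : 𝕂) (A : Matrix m m 𝕂) :
    NormedSpace.exp (a • A) * NormedSpace.exp (b • A) = NormedSpace.exp ((a + b) • A) := by
  rw [add_smul, Matrix.exp_add_of_commute]
  exact ((Commute.refl A).smul_left a).smul_right b

lemma alphaH_mul (N : ℕ) (α β : ℂ) : alphaH N α * alphaH N β = alphaH N (α * β) := by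
  simp [alphaH, diagonal_mul_diagonal, mul_zpow]

lemma isUnit_alphaH (N : ℕ) {α : ℂ} (hα : α ≠ 0) : IsUnit (alphaH N α) :=
  isUnit_diagonal.mpr (Pi.isUnit_iff.mpr fun _ => (zpow_ne_zero _ hα).isUnit)

lemma smul_Xplus_mul_alphaH (N : ℕ) (c : ℂ) {α : ℂ} (hα : α ≠ 0) :
    (c • Xplus N) * alphaH N α = alphaH N α * ((α ^ (-2 : ℤ) * c) • Xplus N) := by
  ext i j
  simp only [alphaH, Matrix.smul_apply, mul_diagonal, diagonal_mul, smul_eq_mul]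
  by_cases hij : (j : ℕ) = (i : ℕ) + 1
  · have hexp : (N : ℤ) - 1 - 2 * (i : ℕ) = 2 + ((N : ℤ) - 1 - 2 * (j : ℕ)) := by
      rw [hij]; push_cast; ring
    rw [hexp, zpow_add₀ hα, _root_.zpow_neg]
    field_simp
  · simp [Xplus, hij]

lemma exp_smul_Xplus_mul_alphaH (N : ℕ) (c : ℂ) {α : ℂ} (hα : α ≠ 0) :
    NormedSpace.exp (c • Xplus N) * alphaH N α =
      alphaH N α * NormedSpace.exp ((α ^ (-2 : ℤ) * c) • Xplus N) :=
  exp_mul_eq_mul_exp_of_mul_eq_mul (isUnit_alphaH N hα) (smul_Xplus_mul_alphaH N c hα)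

theorem transition_cocycle_general (N : ℕ) (hbar : ℂ)
    (α₁ α₂ : ℂ) (hα₁ : α₁ ≠ 0) (γ₁ γ₂ : ℂ) :
    Tmat N hbar α₂ γ₂ * Tmat N hbar α₁ γ₁ =
      Tmat N hbar (α₂ * α₁) (α₁ ^ (-2 : ℤ) * γ₂ + γ₁) := by
  calc Tmat N hbar α₂ γ₂ * Tmat N hbar α₁ γ₁
      = alphaH N α₂ * (NormedSpace.exp ((hbar * γ₂) • Xplus N) * alphaH N α₁) *
          NormedSpace.exp ((hbar * γ₁) • Xplus N) := by
        simp only [Tmat, Matrix.mul_assoc]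
    _ = alphaH N (α₂ * α₁) * (NormedSpace.exp ((α₁ ^ (-2 : ℤ) * (hbar * γ₂)) • Xplus N) *
          NormedSpace.exp ((hbar * γ₁) • Xplus N)) := by
        rw [exp_smul_Xplus_mul_alphaH N _ hα₁, ← alphaH_mul]
        simp only [Matrix.mul_assoc]
    _ = Tmat N hbar (α₂ * α₁) (α₁ ^ (-2 : ℤ) * γ₂ + γ₁) := by
        rw [exp_smul_mul_exp_smul, Tmat]
        congr 3
        ring

/-- Cocycle condition for the transition functions of the deformed bundle `E_hbar`:
`T(α₂, γ₂) · T(α₁, γ₁) = T(α₂ α₁, α₁⁻² γ₂ + γ₁)`. -/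
theorem transition_cocycle (N : ℕ) (hN : 2 ≤ N) (hbar : ℂ)
    (α₁ α₂ : ℂ) (hα₁ : α₁ ≠ 0) (hα₂ : α₂ ≠ 0) (γ₁ γ₂ : ℂ) :
    Tmat N hbar α₂ γ₂ * Tmat N hbar α₁ γ₁ =
      Tmat N hbar (α₂ * α₁) (α₁ ^ (-2 : ℤ) * γ₂ + γ₁) :=
  transition_cocycle_general N hbar α₁ α₂ hα₁ γ₁ γ₂
end

section
/- Let Y be any N×N complex matrix with [X₊, Y] = 0. Then for every t ∈ ℂ: exp(t X₊) · (X₋ + Y) · exp(−t X₊) = X₋ + Y + t·H − t²·X₊, where exp is the matrix exponential. -/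
open Matrix

/-- The matrix `X₋ = X₊ᵀ`. -/
noncomputable def Xminus (N : ℕ) : Matrix (Fin N) (Fin N) ℂ :=
  (Xplus N)ᵀ

/-! Both sides solve `X' = [X₊, X]` with `X 0 = X₋ + Y`: for the right-hand side this is the pair
of `sl₂` relations `[X₊, X₋] = H`, `[H, X₊] = 2 X₊` together with `[X₊, Y] = 0`. Uniqueness comes
from differentiating `exp (-t X₊) X(t) exp (t X₊)`, which is constant. -/

namespace NormedSpace

variable {𝕂 𝔸 : Type*} [RCLike 𝕂] [NormedRing 𝔸] [NormedAlgebra 𝕂 𝔸] [CompleteSpace 𝔸]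

theorem exp_smul_mul_exp_neg_smul (a : 𝔸) (t : 𝕂) : exp (t • a) * exp ((-t) • a) = 1 := by
  have hball (x : 𝔸) : x ∈ Metric.eball (0 : 𝔸) (expSeries 𝕂 𝔸).radius := by
    simp [expSeries_radius_eq_top]
  rw [← exp_add_of_commute_of_mem_ball (((Commute.refl a).smul_left t).smul_right (-t))
    (hball _) (hball _), ← add_smul, add_neg_cancel, zero_smul, exp_zero]

theorem exp_smul_mul_mul_exp_neg_smul_of_hasDerivAt {a : 𝔸} {p p' : 𝕂 → 𝔸}
    (hp : ∀ t, HasDerivAt p (p' t) t) (hp' : ∀ t, p' t = a * p t - p t * a) (t : 𝕂) :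
    exp (t • a) * p 0 * exp ((-t) • a) = p t := by
  set f : 𝕂 → 𝔸 := fun s => exp ((-s) • a) * p s * exp (s • a)
  have hf : ∀ s, HasDerivAt f 0 s := by
    intro s
    have hneg : HasDerivAt (fun s : 𝕂 => exp ((-s) • a)) (exp ((-s) • a) * -a) s := by
      simpa only [neg_smul, smul_neg] using hasDerivAt_exp_smul_const (-a) s
    convert (hneg.fun_mul (hp s)).fun_mul (hasDerivAt_exp_smul_const' a s) using 1
    rw [hp']
    noncomm_ring
  have hconst : f t = f 0 :=
    is_const_of_deriv_eq_zero (fun s => (hf s).differentiableAt) (fun s => (hf s).deriv) t 0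
  simp only [f, neg_zero, zero_smul, exp_zero, one_mul, mul_one] at hconst
  rw [← hconst, ← mul_assoc, ← mul_assoc, exp_smul_mul_exp_neg_smul, one_mul, mul_assoc,
    exp_smul_mul_exp_neg_smul, mul_one]

theorem exp_smul_mul_mul_exp_neg_smul_of_sl2 {a b h : 𝔸} (hab : a * b - b * a = h)
    (hha : h * a - a * h = 2 • a) (t : 𝕂) :
    exp (t • a) * b * exp ((-t) • a) = b + t • h - t ^ 2 • a := by
  have hp (s : 𝕂) : HasDerivAt (fun s => b + s • h - s ^ 2 • a) (h - (2 * s) • a) s := by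
    simpa using (((hasDerivAt_id s).smul_const h).const_add b).fun_sub
      ((hasDerivAt_pow 2 s).smul_const a)
  have hode (s : 𝕂) :
      h - (2 * s) • a = a * (b + s • h - s ^ 2 • a) - (b + s • h - s ^ 2 • a) * a :=
    calc h - (2 * s) • a = (a * b - b * a) - s • (h * a - a * h) := by rw [hab, hha]; module
      _ = _ := by
        simp only [mul_add, mul_sub, add_mul, sub_mul, mul_smul_comm, smul_mul_assoc, smul_sub]
        abel
  simpa using exp_smul_mul_mul_exp_neg_smul_of_hasDerivAt hp hode t

end NormedSpace

namespace Matrix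

variable {R : Type*}

def superdiag [Zero R] (N : ℕ) (w : ℕ → R) : Matrix (Fin N) (Fin N) R :=
  fun i j => if (j : ℕ) = i + 1 then w i else 0

variable {N : ℕ}

section Semiring

variable [Semiring R]

theorem superdiag_mul_transpose_superdiag (w v : ℕ → R) :
    superdiag N w * (superdiag N v)ᵀ =
      diagonal fun i : Fin N => if (i : ℕ) + 1 < N then w i * v i else 0 := by
  ext i j
  simp only [mul_apply, transpose_apply, superdiag, diagonal_apply]
  rw [Fin.sum_univ_eq_sum_range
    (fun k => (if k = (i : ℕ) + 1 then w i else 0) * (if k = (j : ℕ) + 1 then v j else 0))]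
  simp only [ite_mul, zero_mul, Finset.sum_ite_eq', Finset.mem_range, Fin.ext_iff]
  by_cases hij : (i : ℕ) = j <;> simp [hij]

theorem transpose_superdiag_mul_superdiag (v w : ℕ → R) :
    (superdiag N v)ᵀ * superdiag N w =
      diagonal fun i : Fin N => if (i : ℕ) = 0 then 0 else v (i - 1) * w (i - 1) := by
  ext i j
  simp only [mul_apply, transpose_apply, superdiag, diagonal_apply]
  rw [Fin.sum_univ_eq_sum_range
    (fun k => (if (i : ℕ) = k + 1 then v k else 0) * (if (j : ℕ) = k + 1 then w k else 0))]
  obtain ⟨_ | m, hm⟩ := i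
  · simp
  · simp only [Nat.add_right_cancel_iff, ite_mul, zero_mul, Finset.sum_ite_eq]
    by_cases hj : (j : ℕ) = m + 1 <;> simp [Fin.ext_iff, hj] <;> omega

end Semiring

theorem diagonal_mul_superdiag_sub [CommRing R] (d w : ℕ → R) :
    diagonal (fun i : Fin N => d i) * superdiag N w -
        superdiag N w * diagonal (fun i : Fin N => d i) =
      superdiag N fun i => (d i - d (i + 1)) * w i := by
  ext i j
  simp only [sub_apply, diagonal_mul, mul_diagonal, superdiag]
  split_ifs with h
  · rw [h]; ring
  · simp

end Matrix

-- `√r_{i+1}` in the 1-indexed notation of the statement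
noncomputable def xplusWeight (N i : ℕ) : ℂ := √(((i : ℝ) + 1) * (N - 1 - i))

theorem xplusWeight_mul_self {N i : ℕ} (hi : i < N) :
    xplusWeight N i * xplusWeight N i = ((i : ℂ) + 1) * (N - 1 - i) := by
  have hpos : (0 : ℝ) ≤ ((i : ℝ) + 1) * (N - 1 - i) := by
    have : (i : ℝ) + 1 ≤ N := by exact_mod_cast hi
    nlinarith
  rw [xplusWeight, ← Complex.ofReal_mul, Real.mul_self_sqrt hpos]
  push_cast
  ring

section
variable (N : ℕ)

theorem Xplus_eq_superdiag : Xplus N = superdiag N (xplusWeight N) := rfl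

theorem Xplus_mul_Xminus_sub_Xminus_mul_Xplus :
    Xplus N * Xminus N - Xminus N * Xplus N = Hmat N := by
  rw [Xminus, Xplus_eq_superdiag, superdiag_mul_transpose_superdiag,
    transpose_superdiag_mul_superdiag, diagonal_sub, Hmat]
  congr 1
  funext i
  have hlower : (if (i : ℕ) + 1 < N then xplusWeight N i * xplusWeight N i else 0) =
      ((i : ℂ) + 1) * (N - 1 - i) := by
    split_ifs with h
    · exact xplusWeight_mul_self i.isLt
    · have : (N : ℂ) = i + 1 := by exact_mod_cast (by omega : N = i + 1)
      simp [this]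
  have hupper : (if (i : ℕ) = 0 then 0 else xplusWeight N (i - 1) * xplusWeight N (i - 1)) =
      (i : ℂ) * (N - i) := by
    split_ifs with h
    · simp [h]
    · obtain ⟨m, hm⟩ := Nat.exists_eq_add_one_of_ne_zero h
      rw [hm, Nat.add_sub_cancel, xplusWeight_mul_self (by omega)]
      push_cast
      ring
  rw [hlower, hupper]
  ring

theorem Hmat_mul_Xplus_sub_Xplus_mul_Hmat :
    Hmat N * Xplus N - Xplus N * Hmat N = 2 • Xplus N := by
  rw [Hmat, Xplus_eq_superdiag, diagonal_mul_superdiag_sub (fun i => (N : ℂ) - 1 - 2 * i)]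
  ext i j
  simp only [superdiag, Matrix.smul_apply, smul_ite, smul_zero, nsmul_eq_mul]
  split_ifs <;> push_cast <;> ring

end

theorem exp_conjugation_general (N : ℕ)
    (Y : Matrix (Fin N) (Fin N) ℂ) (hY : Xplus N * Y - Y * Xplus N = 0) (t : ℂ) :
    NormedSpace.exp (t • Xplus N) * (Xminus N + Y) *
        NormedSpace.exp ((-t) • Xplus N) =
      Xminus N + Y + t • Hmat N - (t ^ 2) • Xplus N := by
  have hcomm : Xplus N * (Xminus N + Y) - (Xminus N + Y) * Xplus N = Hmat N :=
    calc _ = (Xplus N * Xminus N - Xminus N * Xplus N) + (Xplus N * Y - Y * Xplus N) := by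
          noncomm_ring
      _ = Hmat N := by rw [Xplus_mul_Xminus_sub_Xminus_mul_Xplus, hY, add_zero]
  open scoped Matrix.Norms.Operator in
  exact NormedSpace.exp_smul_mul_mul_exp_neg_smul_of_sl2 hcomm
    (Hmat_mul_Xplus_sub_Xplus_mul_Hmat N) t

/-- For any `Y` commuting with `X₊` and any `t ∈ ℂ`:
`exp(t X₊) (X₋ + Y) exp(-t X₊) = X₋ + Y + t H - t² X₊`. -/
theorem exp_conjugation (N : ℕ) (hN : 2 ≤ N)
    (Y : Matrix (Fin N) (Fin N) ℂ) (hY : Xplus N * Y - Y * Xplus N = 0) (t : ℂ) :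
    NormedSpace.exp (t • Xplus N) * (Xminus N + Y) *
        NormedSpace.exp ((-t) • Xplus N) =
      Xminus N + Y + t • Hmat N - (t ^ 2) • Xplus N :=
  exp_conjugation_general N Y hY t
end

section
/- Fix ħ ∈ ℂ, ħ ≠ 0, and z ∈ ℂ. Let ψ : ℂ → ℂ be three times complex-differentiable at z, let P₂ : ℂ → ℂ be complex-differentiable at z, and let P₃ : ℂ → ℂ be any function. Define v : ℂ → ℂ³ by v(w) = ((ħ³/2)·ψ''(w) − ħ·P₂(w)·ψ(w), −(ħ²/√2)·ψ'(w), ħ·ψ(w)) and the matrix M(z) = [[0, √2·P₂(z), P₃(z)], [√2, 0, √2·P₂(z)], [0, √2, 0]]. Then v is complex-differentiable at z and v'(z) + ħ⁻¹·M(z)·v(z) = ((ħ³/2)·ψ'''(z) − 2ħ·P₂(z)·ψ'(z) − ħ·P₂'(z)·ψ(z) + P₃(z)·ψ(z), 0, 0). (This identifies the SL(3,ℂ)-oper connection applied to the 2-jet lift of ψ with the third-order operator (ħ³/2)∂³ − 2ħP₂∂ − ħP₂' + P₃ applied to ψ.) -/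
open Matrix

/-- The SL(3,ℂ)-oper connection applied to the 2-jet lift of `ψ` is the third-order
operator `(ħ³/2)∂³ - 2ħP₂∂ - ħP₂' + P₃` applied to `ψ`. -/
theorem oper_connection_is_third_order (hbar : ℂ) (hh : hbar ≠ 0) (z : ℂ)
    (ψ ψ' ψ'' ψ''' : ℂ → ℂ) (P₂ P₂' P₃ : ℂ → ℂ)
    (hψ : ∀ᶠ w in nhds z, HasDerivAt ψ (ψ' w) w)
    (hψ' : ∀ᶠ w in nhds z, HasDerivAt ψ' (ψ'' w) w)
    (hψ''' : HasDerivAt ψ'' (ψ''' z) z)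
    (hP₂ : HasDerivAt P₂ (P₂' z) z)
    (v : ℂ → (Fin 3 → ℂ))
    (hv : v = fun w =>
      ![(hbar ^ 3 / 2) * ψ'' w - hbar * P₂ w * ψ w,
        -(hbar ^ 2 / (Real.sqrt 2 : ℂ)) * ψ' w,
        hbar * ψ w]) :
    DifferentiableAt ℂ v z ∧
      deriv v z + hbar⁻¹ •
          ((!![0, (Real.sqrt 2 : ℂ) * P₂ z, P₃ z;
              (Real.sqrt 2 : ℂ), 0, (Real.sqrt 2 : ℂ) * P₂ z;
              0, (Real.sqrt 2 : ℂ), 0] : Matrix (Fin 3) (Fin 3) ℂ) *ᵥ v z)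
        = ![(hbar ^ 3 / 2) * ψ''' z - 2 * hbar * P₂ z * ψ' z
              - hbar * P₂' z * ψ z + P₃ z * ψ z,
            0, 0] := by

  have h0 : HasDerivAt ψ (ψ' z) z := hψ.self_of_nhds
  have h1 : HasDerivAt ψ' (ψ'' z) z := hψ'.self_of_nhds
  have hc0 : HasDerivAt (fun w => (hbar ^ 3 / 2) * ψ'' w - hbar * P₂ w * ψ w)
      ((hbar ^ 3 / 2) * ψ''' z - (hbar * P₂' z * ψ z + hbar * P₂ z * ψ' z)) z := by
    have := (hψ'''.const_mul (hbar ^ 3 / 2)).sub ((hP₂.const_mul hbar).mul h0)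
    exact this
  have hc1 : HasDerivAt (fun w => -(hbar ^ 2 / (Real.sqrt 2 : ℂ)) * ψ' w)
      (-(hbar ^ 2 / (Real.sqrt 2 : ℂ)) * ψ'' z) z := h1.const_mul _
  have hc2 : HasDerivAt (fun w => hbar * ψ w) (hbar * ψ' z) z := h0.const_mul _
  have hvd : HasDerivAt v
      (![(hbar ^ 3 / 2) * ψ''' z - (hbar * P₂' z * ψ z + hbar * P₂ z * ψ' z),
         -(hbar ^ 2 / (Real.sqrt 2 : ℂ)) * ψ'' z,
         hbar * ψ' z]) z := by
    rw [hv, hasDerivAt_pi]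
    intro i
    fin_cases i
    · simpa using hc0
    · simpa using hc1
    · simpa using hc2
  have hs2 : ((Real.sqrt 2 : ℝ) : ℂ) * ((Real.sqrt 2 : ℝ) : ℂ) = 2 := by
    rw [← Complex.ofReal_mul, Real.mul_self_sqrt (by norm_num)]
    norm_num
  have hs2ne : ((Real.sqrt 2 : ℝ) : ℂ) ≠ 0 := by
    intro h; rw [h] at hs2; simp at hs2
  refine ⟨hvd.differentiableAt, ?_⟩
  rw [hvd.deriv, hv]
  funext i
  fin_cases i <;>
    simp [Matrix.mulVec, dotProduct, Fin.sum_univ_succ] <;>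
    field_simp <;> ring_nf <;>
    first
      | rfl
      | (rw [show ((Real.sqrt 2 : ℝ) : ℂ) ^ 2 = 2 by rw [sq, hs2]]; ring)
end
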